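/- Let d be a natural number and let P, Q ∈ ℂ[x] be polynomials satisfying: (i) deg P ≤ d and deg Q ≤ d−1 (with Q = 0 when d = 0); (ii) P(−x) = (−1)^d P(x) and Q(−x) = (−1)^{d−1} Q(x); (iii) |P(a)|² + (1−a²)|Q(a)|² = 1 for all a ∈ [−1,1]. Then there exist phases φ₀, φ₁, …, φ_d ∈ ℝ such that for all a ∈ [−1,1], S(φ₀) · ∏_{k=1}^{d} ( W(a) · S(φ_k) ) = [[P(a), i·Q(a)·√(1−a²)], [i·conj(Q(a))·√(1−a²), conj(P(a))]]. -/

import Mathlib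

open Matrix Polynomial

/-- The QSP signal rotation operator `W(a)`. -/
noncomputable def Wmat (a : ℝ) : Matrix (Fin 2) (Fin 2) ℂ :=
  !![(a : ℂ), Complex.I * Real.sqrt (1 - a ^ 2);
     Complex.I * Real.sqrt (1 - a ^ 2), (a : ℂ)]

/-- The QSP signal processing operator `S(φ) = e^{iφZ}`. -/
noncomputable def Smat (φ : ℝ) : Matrix (Fin 2) (Fin 2) ℂ :=
  !![Complex.exp (Complex.I * φ), 0; 0, Complex.exp (-(Complex.I * φ))]

/-- The QSP sequence `S(φ₀) ∏_{k=1}^d (W(a) S(φ_k))`, product ordered with increasing `k`. -/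
noncomputable def qspSeq (d : ℕ) (φ : ℕ → ℝ) (a : ℝ) : Matrix (Fin 2) (Fin 2) ℂ :=
  Smat (φ 0) * ((List.range d).map (fun k => Wmat a * Smat (φ (k + 1)))).prod

/-- The target matrix of the QSP theorem. -/
noncomputable def qspMat (P Q : Polynomial ℂ) (a : ℝ) : Matrix (Fin 2) (Fin 2) ℂ :=
  !![P.eval (a : ℂ), Complex.I * Q.eval (a : ℂ) * Real.sqrt (1 - a ^ 2);
     Complex.I * (starRingEnd ℂ) (Q.eval (a : ℂ)) * Real.sqrt (1 - a ^ 2),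
     (starRingEnd ℂ) (P.eval (a : ℂ))]

lemma coeff_comp_negX (P : ℂ[X]) (m : ℕ) :
    (P.comp (-X)).coeff m = (-1 : ℂ) ^ m * P.coeff m := by
  induction P using Polynomial.induction_on' with
  | add p q hp hq => simp only [add_comp, coeff_add, hp, hq]; ring
  | monomial n a =>
    have key : ((monomial n a : ℂ[X]).comp (-X)) = C ((-1) ^ n * a) * X ^ n := by
      rw [← C_mul_X_pow_eq_monomial, mul_comp, C_comp, pow_comp, X_comp, neg_pow]
      simp only [_root_.map_mul, map_pow, _root_.map_neg, _root_.map_one]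
      ring
    rw [key, coeff_C_mul, coeff_X_pow, coeff_monomial]
    rcases eq_or_ne n m with h | h
    · subst h; simp
    · simp [h, Ne.symm h]

lemma coeff_parity_zero {P : ℂ[X]} {k : ℕ} (h : P.comp (-X) = (-1) ^ k * P)
    {m : ℕ} (hm : m % 2 ≠ k % 2) : P.coeff m = 0 := by
  have h1 := congrArg (fun p => Polynomial.coeff p m) h
  have h2 : ((-1 : ℂ[X]) ^ k * P).coeff m = (-1 : ℂ) ^ k * P.coeff m := by
    have : ((-1 : ℂ[X]) ^ k) = C ((-1 : ℂ) ^ k) := by simp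
    rw [this, coeff_C_mul]
  rw [coeff_comp_negX, h2] at h1
  rcases Nat.even_or_odd m with hme | hmo
  · have hko : Odd k := by
      rcases Nat.even_or_odd k with hke | hko
      · rw [Nat.even_iff] at hme hke; omega
      · exact hko
    rw [hme.neg_one_pow, hko.neg_one_pow] at h1
    linear_combination (1/2 : ℂ) * h1
  · have hke : Even k := by
      rcases Nat.even_or_odd k with hke | hko
      · exact hke
      · rw [Nat.odd_iff] at hmo hko; omega
    rw [hmo.neg_one_pow, hke.neg_one_pow] at h1
    linear_combination (-1/2 : ℂ) * h1

lemma coeff_mul_of_degree_le {p r : ℂ[X]} {m n : ℕ} (hp : p.degree ≤ m) (hr : r.degree ≤ n) :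
    (p * r).coeff (m + n) = p.coeff m * r.coeff n := by
  rw [coeff_mul, Finset.sum_eq_single (m, n)]
  · intro b hb hne
    have h : b.1 + b.2 = m + n := Finset.HasAntidiagonal.mem_antidiagonal.mp hb
    have hbne : ¬(b.1 = m ∧ b.2 = n) := by
      rcases b with ⟨b1, b2⟩
      simpa [Prod.ext_iff] using hne
    rcases lt_or_ge m b.1 with h1 | h1
    · rw [Polynomial.coeff_eq_zero_of_degree_lt (lt_of_le_of_lt hp (by exact_mod_cast h1)),
        zero_mul]
    · have h2 : n < b.2 := by omega
      rw [Polynomial.coeff_eq_zero_of_degree_lt (lt_of_le_of_lt hr (by exact_mod_cast h2)),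
        mul_zero]
  · intro h; simp [Finset.HasAntidiagonal.mem_antidiagonal] at h

lemma exists_half_phase (p q : ℂ) (h : p * (starRingEnd ℂ) p = q * (starRingEnd ℂ) q) :
    ∃ φ : ℝ, Complex.exp (Complex.I * φ) * q = Complex.exp (-(Complex.I * φ)) * p := by
  by_cases hq : q = 0
  · have hp : p = 0 := by
      have hn : Complex.normSq p = Complex.normSq q := by
        rw [Complex.mul_conj, Complex.mul_conj] at h
        exact_mod_cast h
      rw [hq] at hn; simpa [Complex.normSq_eq_zero] using hn
    exact ⟨0, by simp [hp, hq]⟩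
  · set z := p / q with hz
    have h1 : ‖p‖ = ‖q‖ := by
      have hn : Complex.normSq p = Complex.normSq q := by
        rw [Complex.mul_conj, Complex.mul_conj] at h
        exact_mod_cast h
      rw [Complex.norm_def, Complex.norm_def, hn]
    have habs : ‖z‖ = 1 := by
      rw [hz, norm_div, h1, div_self (norm_ne_zero_iff.mpr hq)]
    have hexp : Complex.exp (z.arg * Complex.I) = z := by
      have := Complex.norm_mul_exp_arg_mul_I z
      rwa [habs, Complex.ofReal_one, one_mul] at this
    refine ⟨z.arg / 2, ?_⟩
    set e := Complex.exp (Complex.I * ((z.arg / 2 : ℝ) : ℂ)) with hedef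
    have hne : e ≠ 0 := Complex.exp_ne_zero _
    have he2 : e * e = z := by
      rw [hedef, ← Complex.exp_add,
        show Complex.I * ((z.arg / 2 : ℝ) : ℂ) + Complex.I * ((z.arg / 2 : ℝ) : ℂ) =
          (z.arg : ℂ) * Complex.I by push_cast; ring, hexp]
    have hz2 : e * e * q = p := by rw [he2, hz]; field_simp
    have hinv : Complex.exp (-(Complex.I * ((z.arg / 2 : ℝ) : ℂ))) = e⁻¹ := by
      rw [hedef, ← Complex.exp_neg]
    rw [hinv, eq_comm, inv_mul_eq_iff_eq_mul₀ hne]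
    linear_combination -hz2

lemma qspSeq_succ (n : ℕ) (φ : ℕ → ℝ) (a : ℝ) :
    qspSeq (n + 1) φ a = qspSeq n φ a * (Wmat a * Smat (φ (n + 1))) := by
  unfold qspSeq
  rw [List.range_succ, List.map_append, List.prod_append]
  simp [mul_assoc]

lemma qspSeq_congr (n : ℕ) (φ ψ : ℕ → ℝ) (a : ℝ) (h : ∀ k ≤ n, φ k = ψ k) :
    qspSeq n φ a = qspSeq n ψ a := by
  unfold qspSeq
  rw [h 0 (Nat.zero_le _)]
  congr 1
  apply congrArg
  apply List.map_congr_left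
  intro k hk
  rw [h (k + 1) (by simpa using (List.mem_range.mp hk))]

lemma qsp_step_matrix (P Q P' Q' : ℂ[X]) (φd : ℝ) (a : ℝ) (ha : a ∈ Set.Icc (-1:ℝ) 1)
    (e ec : ℂ) (hedef : e = Complex.exp (Complex.I * (φd : ℂ)))
    (hecdef : ec = Complex.exp (-(Complex.I * (φd : ℂ))))
    (hee : e * ec = 1) (hce : (starRingEnd ℂ) e = ec)
    (hP' : P' = C ec * (X * P) + C e * ((1 - X^2) * Q))
    (hQ' : Q' = C e * (X * Q) - C ec * P) :
    qspMat P' Q' a * (Wmat a * Smat φd) = qspMat P Q a := by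
  have ha2 : (0:ℝ) ≤ 1 - a^2 := by nlinarith [ha.1, ha.2]
  set s : ℝ := Real.sqrt (1 - a^2) with hsdef
  have hs : ((s:ℝ):ℂ)^2 = 1 - (a:ℂ)^2 := by
    rw [hsdef]
    norm_cast
    rw [Real.sq_sqrt ha2]
  have hcec : (starRingEnd ℂ) ec = e := by rw [← hce, Complex.conj_conj]
  have hevP : P'.eval (a:ℂ) = ec * ((a:ℂ) * P.eval (a:ℂ)) + e * ((1 - (a:ℂ)^2) * Q.eval (a:ℂ)) := by
    simp [hP']
  have hevQ : Q'.eval (a:ℂ) = e * ((a:ℂ) * Q.eval (a:ℂ)) - ec * P.eval (a:ℂ) := by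
    simp [hQ']
  have hevPc : (starRingEnd ℂ) (P'.eval (a:ℂ))
      = e * ((a:ℂ) * (starRingEnd ℂ) (P.eval (a:ℂ))) + ec * ((1 - (a:ℂ)^2) * (starRingEnd ℂ) (Q.eval (a:ℂ))) := by
    rw [hevP]
    simp only [_root_.map_add, _root_.map_mul, _root_.map_sub, map_pow, _root_.map_one, Complex.conj_ofReal, hce, hcec]
  have hevQc : (starRingEnd ℂ) (Q'.eval (a:ℂ))
      = ec * ((a:ℂ) * (starRingEnd ℂ) (Q.eval (a:ℂ))) - e * (starRingEnd ℂ) (P.eval (a:ℂ)) := by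
    rw [hevQ]
    simp only [_root_.map_add, _root_.map_mul, _root_.map_sub, map_pow, _root_.map_one, Complex.conj_ofReal, hce, hcec]
  rw [qspMat, qspMat, Wmat, Smat, ← hedef, ← hecdef, ← hsdef, Matrix.mul_fin_two,
    Matrix.mul_fin_two]
  rw [hevPc, hevQc, hevP, hevQ]
  ext i j
  fin_cases i <;> fin_cases j <;> simp only [Matrix.cons_val', Matrix.cons_val_zero,
    Matrix.cons_val_one, Matrix.head_cons, Matrix.head_fin_const, Matrix.empty_val',
    Matrix.cons_val_fin_one, Matrix.of_apply, Fin.mk_zero, Fin.mk_one, Fin.isValue]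
  · linear_combination ((s:ℂ)^2 * e * (e * (a:ℂ) * Q.eval (a:ℂ) - ec * P.eval (a:ℂ))) * Complex.I_sq +
      (e * ec * P.eval (a:ℂ) - e^2 * (a:ℂ) * Q.eval (a:ℂ)) * hs + (P.eval (a:ℂ)) * hee
  · linear_combination (Complex.I * (s:ℂ) * Q.eval (a:ℂ)) * hee
  · linear_combination (Complex.I * (s:ℂ) * (starRingEnd ℂ) (Q.eval (a:ℂ))) * hee
  · linear_combination ((s:ℂ)^2 * ec * (ec * (a:ℂ) * (starRingEnd ℂ) (Q.eval (a:ℂ)) - e * (starRingEnd ℂ) (P.eval (a:ℂ)))) * Complex.I_sq +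
      (ec * e * (starRingEnd ℂ) (P.eval (a:ℂ)) - ec^2 * (a:ℂ) * (starRingEnd ℂ) (Q.eval (a:ℂ))) * hs +
      ((starRingEnd ℂ) (P.eval (a:ℂ))) * hee

theorem qsp_aux (d : ℕ) : ∀ (P Q : Polynomial ℂ),
    P.degree ≤ (d : ℕ) → Q.degree < (d : ℕ) →
    P.comp (-X) = (-1) ^ d * P → Q.comp (-X) = (-1) ^ (d - 1) * Q →
    P * P.map (starRingEnd ℂ) + (1 - X^2) * (Q * Q.map (starRingEnd ℂ)) = 1 →
    ∃ φ : ℕ → ℝ, ∀ a : ℝ, a ∈ Set.Icc (-1 : ℝ) 1 → qspSeq d φ a = qspMat P Q a := by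
  induction d with
  | zero =>
    intro P Q hdP hdQ _ _ hid
    have hQ0 : Q = 0 := degree_eq_bot.mp (Nat.WithBot.lt_zero_iff.mp (by exact_mod_cast hdQ))
    have hP : P = C (P.coeff 0) := eq_C_of_degree_le_zero (by exact_mod_cast hdP)
    set c := P.coeff 0 with hc
    have hcc : c * (starRingEnd ℂ) c = 1 := by
      rw [hP, hQ0] at hid
      simp only [Polynomial.map_C, mul_zero, zero_mul, add_zero, ← C_mul] at hid
      rw [← C_1] at hid
      exact C_inj.mp hid
    have habs : ‖c‖ = 1 := by
      have h1 : Complex.normSq c = 1 := by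
        rw [Complex.mul_conj] at hcc; exact_mod_cast hcc
      rw [Complex.norm_def, h1, Real.sqrt_one]
    have hcexp : Complex.exp (Complex.I * (c.arg : ℂ)) = c := by
      have := Complex.norm_mul_exp_arg_mul_I c
      rw [habs, Complex.ofReal_one, one_mul, mul_comm] at this
      exact this
    have hcexp' : Complex.exp (-(Complex.I * (c.arg : ℂ))) = (starRingEnd ℂ) c := by
      have : (starRingEnd ℂ) c = Complex.exp (-(Complex.I * (c.arg : ℂ))) := by
        conv_lhs => rw [← hcexp]
        rw [← Complex.exp_conj]
        congr 1
        simp [Complex.conj_ofReal]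
      rw [this]
    refine ⟨fun _ => c.arg, ?_⟩
    intro a ha
    have h0 : qspSeq 0 (fun _ => c.arg) a = Smat c.arg := by simp [qspSeq]
    rw [h0, hP, hQ0, Smat, qspMat]
    simp [hcexp, hcexp']
  | succ n IH =>
    intro P Q hdP hdQ hpP hpQ hid
    have hpQn : Q.comp (-X) = (-1) ^ n * Q := by simpa using hpQ
    have hdQle : Q.degree ≤ ((n:ℕ) : WithBot ℕ) := by
      rw [degree_le_iff_coeff_zero]
      intro m hm
      have hm' : n < m := by exact_mod_cast hm
      exact (degree_lt_iff_coeff_zero Q (n+1)).mp (by exact_mod_cast hdQ) m (by omega)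
    -- leading coefficient identity
    set Pc := P.map (starRingEnd ℂ) with hPcdef
    set Qc := Q.map (starRingEnd ℂ) with hQcdef
    have hdPc : Pc.degree ≤ ((n+1:ℕ):WithBot ℕ) := le_trans (degree_map_le) hdP
    have hdQc : Qc.degree ≤ ((n:ℕ):WithBot ℕ) := le_trans (degree_map_le) hdQle
    have hpq : P.coeff (n+1) * (starRingEnd ℂ) (P.coeff (n+1))
        = Q.coeff n * (starRingEnd ℂ) (Q.coeff n) := by
      have h0 := congrArg (fun f => Polynomial.coeff f (n+n+2)) hid
      have c1 : (P * Pc).coeff (n+n+2) = P.coeff (n+1) * (starRingEnd ℂ) (P.coeff (n+1)) := by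
        rw [show n+n+2 = (n+1)+(n+1) by omega, coeff_mul_of_degree_le hdP hdPc, hPcdef, coeff_map]
      have hQQdeg : (Q * Qc).degree ≤ ((n+n:ℕ):WithBot ℕ) := by
        refine le_trans (degree_mul_le _ _) ?_
        rw [Nat.cast_add]
        exact add_le_add hdQle hdQc
      have c2 : ((1 - X^2) * (Q * Qc)).coeff (n+n+2)
          = -(Q.coeff n * (starRingEnd ℂ) (Q.coeff n)) := by
        have hrw : (1 - X^2 : ℂ[X]) * (Q * Qc) = (Q * Qc) - X^2 * (Q * Qc) := by ring
        rw [hrw, coeff_sub, coeff_X_pow_mul]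
        have hz : (Q * Qc).coeff (n+n+2) = 0 := by
          apply coeff_eq_zero_of_degree_lt
          refine lt_of_le_of_lt hQQdeg ?_
          exact_mod_cast by omega
        rw [hz, coeff_mul_of_degree_le hdQle hdQc, hQcdef, coeff_map]
        ring
      rw [coeff_add, c1, c2, coeff_one] at h0
      simp only [if_neg (by omega : ¬ (n+n+2 = 0))] at h0
      linear_combination h0
    obtain ⟨φd, hφd⟩ := exists_half_phase (P.coeff (n+1)) (Q.coeff n) hpq
    set e := Complex.exp (Complex.I * (φd : ℂ)) with hedef
    set ec := Complex.exp (-(Complex.I * (φd : ℂ))) with hecdef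
    have hee : e * ec = 1 := by rw [hedef, hecdef, ← Complex.exp_add]; simp
    have hce : (starRingEnd ℂ) e = ec := by
      rw [hedef, hecdef, ← Complex.exp_conj]
      congr 1
      simp [Complex.conj_ofReal]
    have hcec : (starRingEnd ℂ) ec = e := by rw [← hce, Complex.conj_conj]
    set P' := C ec * (X * P) + C e * ((1 - X^2) * Q) with hP'def
    set Q' := C e * (X * Q) - C ec * P with hQ'def
    have parP : ∀ m, m % 2 ≠ (n+1) % 2 → P.coeff m = 0 := fun m hm => coeff_parity_zero hpP hm
    have parQ : ∀ m, m % 2 ≠ n % 2 → Q.coeff m = 0 := fun m hm => coeff_parity_zero hpQn hm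
    have degP : ∀ m, n+1 < m → P.coeff m = 0 := fun m hm =>
      coeff_eq_zero_of_degree_lt (lt_of_le_of_lt hdP (by exact_mod_cast hm))
    have degQ : ∀ m, n < m → Q.coeff m = 0 := fun m hm =>
      coeff_eq_zero_of_degree_lt (lt_of_le_of_lt hdQle (by exact_mod_cast hm))
    have hdQ' : Q'.degree < ((n:ℕ) : WithBot ℕ) := by
      rw [degree_lt_iff_coeff_zero]
      intro m hm
      have hm' : n ≤ m := by exact_mod_cast hm
      have hc : Q'.coeff m = e * (X * Q).coeff m - ec * P.coeff m := by
        simp [hQ'def, coeff_sub, coeff_C_mul]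
      rcases m with _ | m'
      · rw [hc, mul_coeff_zero, coeff_X_zero, zero_mul, mul_zero, zero_sub, neg_eq_zero]
        rw [parP 0 (by omega), mul_zero]
      · rw [hc, coeff_X_mul]
        by_cases h1 : m' + 1 = n + 1
        · have hq : m' = n := by omega
          rw [hq]
          linear_combination hφd
        · by_cases h2 : m' + 1 = n
          · rw [parQ m' (by omega), parP (m'+1) (by omega), mul_zero, mul_zero, sub_zero]
          · rw [degQ m' (by omega), degP (m'+1) (by omega), mul_zero, mul_zero, sub_zero]
    have hdP' : P'.degree ≤ ((n:ℕ) : WithBot ℕ) := by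
      rw [degree_le_iff_coeff_zero]
      intro m hm
      have hm' : n < m := by exact_mod_cast hm
      have hrw : (1 - X^2 : ℂ[X]) * Q = Q - X^2 * Q := by ring
      have hc : P'.coeff m = ec * (X * P).coeff m + e * (Q.coeff m - (X^2 * Q).coeff m) := by
        rw [hP'def, hrw]
        simp [coeff_C_mul, coeff_add, coeff_sub]
      rcases m with _ | m
      · omega
      rcases m with _ | m''
      · rw [hc, coeff_X_mul, parP 0 (by omega), degQ 1 (by omega)]
        have hx2 : ((X^2 : ℂ[X]) * Q).coeff 1 = 0 := by
          rw [pow_two, mul_assoc, coeff_X_mul, mul_coeff_zero, coeff_X_zero, zero_mul]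
        rw [hx2]
        ring
      · rw [hc, coeff_X_pow_mul, show m'' + 1 + 1 = (m''+1)+1 by omega, coeff_X_mul]
        by_cases h1 : m'' + 2 = n + 1
        · rw [parP (m''+1) (by omega), parQ m'' (by omega), degQ (m''+2) (by omega)]
          ring
        · by_cases h2 : m'' + 2 = n + 2
          · have hq : m'' = n := by omega
            rw [hq, degQ (n+2) (by omega)]
            linear_combination -hφd
          · rw [degP (m''+1) (by omega), degQ m'' (by omega), degQ (m''+2) (by omega)]
            ring
    have hpP' : P'.comp (-X) = (-1) ^ n * P' := by
      rw [hP'def]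
      simp only [add_comp, mul_comp, C_comp, X_comp, sub_comp, one_comp, pow_comp, hpP, hpQn,
        pow_succ]
      ring
    have hpQ' : Q'.comp (-X) = (-1) ^ (n - 1) * Q' := by
      rcases n with _ | k
      · have hQ'0 : Q' = 0 :=
          degree_eq_bot.mp (Nat.WithBot.lt_zero_iff.mp (by exact_mod_cast hdQ'))
        rw [hQ'0]
        simp
      · rw [hQ'def]
        simp only [Nat.add_sub_cancel, sub_comp, mul_comp, C_comp, X_comp, hpP, hpQn, pow_succ]
        ring
    have hid' : P' * P'.map (starRingEnd ℂ) + (1 - X^2) * (Q' * Q'.map (starRingEnd ℂ)) = 1 := by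
      have hmapP : (P'.map (starRingEnd ℂ))
          = C ((starRingEnd ℂ) ec) * (X * Pc) + C ((starRingEnd ℂ) e) * ((1 - X^2) * Qc) := by
        rw [hP'def, hPcdef, hQcdef]
        simp [Polynomial.map_add, Polynomial.map_mul, Polynomial.map_C, Polynomial.map_X,
          Polynomial.map_sub, Polynomial.map_one, Polynomial.map_pow]
      have hmapQ : (Q'.map (starRingEnd ℂ))
          = C ((starRingEnd ℂ) e) * (X * Qc) - C ((starRingEnd ℂ) ec) * Pc := by
        rw [hQ'def, hPcdef, hQcdef]
        simp [Polynomial.map_sub, Polynomial.map_mul, Polynomial.map_C, Polynomial.map_X]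
      have hCee : (C e * C ec : ℂ[X]) = 1 := by rw [← C_mul, hee, C_1]
      rw [hmapP, hmapQ, hce, hcec, hP'def, hQ'def]
      linear_combination (C e * C ec) * hid + hCee
    obtain ⟨ψ, hψ⟩ := IH P' Q' hdP' hdQ' hpP' hpQ' hid'
    refine ⟨fun k => if k = n + 1 then φd else ψ k, ?_⟩
    intro a ha
    have h1 : qspSeq n (fun k => if k = n + 1 then φd else ψ k) a = qspSeq n ψ a :=
      qspSeq_congr n _ ψ a (fun k hk => by simp [Nat.ne_of_lt (by omega : k < n + 1)])
    rw [qspSeq_succ, h1]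
    simp only [if_pos rfl]
    rw [hψ a ha]
    exact qsp_step_matrix P Q P' Q' φd a ha e ec hedef hecdef hee hce hP'def hQ'def

theorem qsp_hid (P Q : Polynomial ℂ)
    (hnorm : ∀ a : ℝ, a ∈ Set.Icc (-1 : ℝ) 1 →
      ‖P.eval (a : ℂ)‖ ^ 2 + (1 - a ^ 2) * ‖Q.eval (a : ℂ)‖ ^ 2 = 1) :
    P * P.map (starRingEnd ℂ) + (1 - X^2) * (Q * Q.map (starRingEnd ℂ)) = 1 := by
  have hmape : ∀ (R : ℂ[X]) (a : ℝ),
      (R.map (starRingEnd ℂ)).eval (a:ℂ) = (starRingEnd ℂ) (R.eval (a:ℂ)) := by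
    intro R a
    rw [eval_map]
    conv_lhs => rw [show ((a:ℂ)) = (starRingEnd ℂ) (a:ℂ) from (Complex.conj_ofReal a).symm]
    exact eval₂_hom _ _
  set F := P * P.map (starRingEnd ℂ) + (1 - X^2) * (Q * Q.map (starRingEnd ℂ)) - 1 with hF
  have hroot : ∀ a : ℝ, a ∈ Set.Icc (-1:ℝ) 1 → F.IsRoot (a:ℂ) := by
    intro a ha
    have hn := hnorm a ha
    have hn2 := congrArg (fun t : ℝ => (t : ℂ)) hn
    simp only [Complex.ofReal_add, Complex.ofReal_mul, Complex.ofReal_pow, Complex.ofReal_sub,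
      Complex.ofReal_one] at hn2
    have hP2 : ((‖P.eval (a:ℂ)‖ : ℂ))^2
        = P.eval (a:ℂ) * (starRingEnd ℂ) (P.eval (a:ℂ)) := by
      rw [Complex.mul_conj, Complex.normSq_eq_norm_sq]
      push_cast
      ring
    have hQ2 : ((‖Q.eval (a:ℂ)‖ : ℂ))^2
        = Q.eval (a:ℂ) * (starRingEnd ℂ) (Q.eval (a:ℂ)) := by
      rw [Complex.mul_conj, Complex.normSq_eq_norm_sq]
      push_cast
      ring
    rw [hP2, hQ2] at hn2
    unfold Polynomial.IsRoot
    rw [hF]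
    simp only [eval_sub, eval_add, eval_mul, eval_one, eval_pow, eval_X, hmape]
    rw [sub_eq_zero]
    convert hn2 using 2
  have himg : {x : ℂ | F.IsRoot x}.Infinite := by
    apply Set.Infinite.mono (s := (fun t : ℝ => (t:ℂ)) '' Set.Icc (-1:ℝ) 1)
    · rintro x ⟨t, ht, rfl⟩
      exact hroot t ht
    · exact (Set.Icc_infinite (by norm_num)).image
        (Set.injOn_of_injective Complex.ofReal_injective)
  have hF0 : F = 0 := Polynomial.eq_zero_of_infinite_isRoot F himg
  have := sub_eq_zero.mp hF0
  linear_combination this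

/-- Converse direction of the QSP theorem (Theorem 1): existence of phases. -/
theorem qsp_converse (d : ℕ) (P Q : Polynomial ℂ)
    (hdegP : P.degree ≤ (d : ℕ)) (hdegQ : Q.degree < (d : ℕ))
    (hparP : P.comp (-X) = (-1) ^ d * P) (hparQ : Q.comp (-X) = (-1) ^ (d - 1) * Q)
    (hnorm : ∀ a : ℝ, a ∈ Set.Icc (-1 : ℝ) 1 →
      ‖P.eval (a : ℂ)‖ ^ 2 + (1 - a ^ 2) * ‖Q.eval (a : ℂ)‖ ^ 2 = 1) :
    ∃ φ : ℕ → ℝ, ∀ a : ℝ, a ∈ Set.Icc (-1 : ℝ) 1 →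
      qspSeq d φ a =
        !![P.eval (a : ℂ), Complex.I * Q.eval (a : ℂ) * Real.sqrt (1 - a ^ 2);
           Complex.I * (starRingEnd ℂ) (Q.eval (a : ℂ)) * Real.sqrt (1 - a ^ 2),
           (starRingEnd ℂ) (P.eval (a : ℂ))] := by
  obtain ⟨φ, hφ⟩ := qsp_aux d P Q hdegP hdegQ hparP hparQ (qsp_hid P Q hnorm)
  exact ⟨φ, fun a ha => (hφ a ha).trans (by rw [qspMat])⟩
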